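/- Let G be an undirected graph with positive edge weights and let π = (v_1, ..., v_m) be a shortest path. Suppose a vertex w is adjacent to five distinct vertices v_{i_1}, ..., v_{i_5} of π (i_1 < ... < i_5) with all five edge weights len_G(v_{i_k}, w) in the same dyadic class [2^y, 2^{y+1}), and suppose len_G(v_{i_k}, w) ≤ dist_G(v_{i_k}, v_{i_{k+1}}) for k=1,...,4. Then a contradiction follows: dist_G(v_{i_1}, v_{i_5}) < dist_G(v_{i_1}, v_{i_5}). Hence any vertex w can satisfy these adjacency conditions for at most 4 vertices of π per dyadic weight class. -/

import Mathlib

/-! Subwalks of a shortest walk are shortest walks (splice a shorter one in and cancel the finite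
rest), so distances add up along `π`: `dist(v_{i_1}, v_{i_5})` is the sum of the four consecutive
distances, each at least `2^y`. The two-edge detour through `w` is shorter than
`2^(y+1) + 2^(y+1) = 4 * 2^y`. -/

open scoped ENNReal Classical

variable {V : Type*}

/-- Length of a walk (list of vertices) given edge weights `len`
(`len u v = ∞` means the edge `(u,v)` is absent). -/
noncomputable def walkLen (len : V → V → ℝ≥0∞) : List V → ℝ≥0∞
  | [] => 0
  | [_] => 0
  | u :: v :: rest => len u v + walkLen len (v :: rest)

/-- `p` is a walk starting at `s` and ending at `t`. -/
def IsWalkFromTo (s t : V) (p : List V) : Prop :=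
  p.head? = some s ∧ p.getLast? = some t

/-- Shortest-path distance: infimum of lengths of walks from `s` to `t`. -/
noncomputable def gdist (len : V → V → ℝ≥0∞) (s t : V) : ℝ≥0∞ :=
  ⨅ (p : List V) (_ : IsWalkFromTo s t p), walkLen len p

theorem walkLen_append_cons (len : V → V → ℝ≥0∞) (p q : List V) (x : V) :
    walkLen len (p ++ x :: q) = walkLen len (p ++ [x]) + walkLen len (x :: q) := by
  induction p with
  | nil => simp [walkLen]
  | cons a p ih =>
    cases p with
    | nil => cases q <;> simp [walkLen]
    | cons b p' =>
      simp only [List.cons_append, walkLen] at *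
      rw [ih, add_assoc]

theorem walkLen_eq_take_add_drop (len : V → V → ℝ≥0∞) (π : List V) {i : ℕ}
    (hi : i < π.length) :
    walkLen len π = walkLen len (π.take (i + 1)) + walkLen len (π.drop i) := by
  conv_lhs => rw [← List.take_append_drop i π, List.drop_eq_getElem_cons hi]
  rw [walkLen_append_cons, List.take_add_one, List.getElem?_eq_getElem hi,
    List.drop_eq_getElem_cons hi]
  rfl

theorem walkLen_take_eq_add_walkLen_drop_take (len : V → V → ℝ≥0∞) (π : List V)
    {i j : ℕ} (hij : i ≤ j) (hj : j < π.length) :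
    walkLen len (π.take (j + 1)) =
      walkLen len (π.take (i + 1)) + walkLen len ((π.take (j + 1)).drop i) := by
  rw [walkLen_eq_take_add_drop len (π.take (j + 1)) (i := i) (by simp; omega),
    List.take_take, Nat.min_eq_left (by omega)]

theorem walkLen_append_tail (len : V → V → ℝ≥0∞) {p q : List V} {b : V}
    (hp : p.getLast? = some b) (hq : q.head? = some b) :
    walkLen len (p ++ q.tail) = walkLen len p + walkLen len q := by
  obtain ⟨q, rfl⟩ : ∃ q', q = b :: q' := List.head?_eq_some_iff.mp hq
  obtain ⟨p, rfl⟩ : ∃ p', p = p' ++ [b] := List.getLast?_eq_some_iff.mp hp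
  simp only [List.tail_cons, List.append_assoc, List.singleton_append]
  exact walkLen_append_cons len p q b

theorem IsWalkFromTo.append_tail {a b c : V} {p q : List V}
    (hp : IsWalkFromTo a b p) (hq : IsWalkFromTo b c q) :
    IsWalkFromTo a c (p ++ q.tail) := by
  obtain ⟨q, rfl⟩ : ∃ q', q = b :: q' := List.head?_eq_some_iff.mp hq.1
  obtain ⟨p, rfl⟩ : ∃ p', p = p' ++ [b] := List.getLast?_eq_some_iff.mp hp.2
  have := hp.1
  have := hq.2
  constructor <;> cases p <;> cases q <;> simp_all [List.getLast?_cons]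

theorem IsWalkFromTo.take {s t : V} {π : List V} (hπ : IsWalkFromTo s t π) {i : ℕ}
    (hi : i < π.length) : IsWalkFromTo s π[i] (π.take (i + 1)) := by
  refine ⟨?_, ?_⟩
  · rw [List.head?_take]; simpa using hπ.1
  · rw [List.getLast?_take]; simp [List.getElem?_eq_getElem hi]

theorem IsWalkFromTo.drop {s t : V} {π : List V} (hπ : IsWalkFromTo s t π) {i : ℕ}
    (hi : i < π.length) : IsWalkFromTo π[i] t (π.drop i) := by
  refine ⟨?_, ?_⟩
  · rw [List.drop_eq_getElem_cons hi]; rfl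
  · rw [List.getLast?_drop, if_neg (by omega)]; exact hπ.2

theorem gdist_le_walkLen (len : V → V → ℝ≥0∞) {s t : V} {p : List V}
    (hp : IsWalkFromTo s t p) : gdist len s t ≤ walkLen len p :=
  iInf₂_le p hp

theorem gdist_triangle (len : V → V → ℝ≥0∞) (a b c : V) :
    gdist len a c ≤ gdist len a b + gdist len b c := by
  simp only [gdist, ENNReal.iInf_add, ENNReal.add_iInf]
  refine le_iInf₂ fun q hq => le_iInf₂ fun p hp => ?_
  rw [← walkLen_append_tail len hp.2 hq.1]
  exact gdist_le_walkLen len (hp.append_tail hq)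

theorem gdist_le_len_add_len (len : V → V → ℝ≥0∞) (a w b : V) :
    gdist len a b ≤ len a w + len w b := by
  simpa [walkLen] using gdist_le_walkLen len (p := [a, w, b]) ⟨rfl, rfl⟩

theorem gdist_eq_walkLen_drop_take {len : V → V → ℝ≥0∞} {s t : V} {π : List V}
    (hπ : IsWalkFromTo s t π) (hshort : walkLen len π = gdist len s t)
    (hfin : walkLen len π ≠ ∞) {i j : ℕ} (hij : i ≤ j) (hj : j < π.length) :
    gdist len π[i] π[j] = walkLen len ((π.take (j + 1)).drop i) := by
  have hseg : IsWalkFromTo π[i] π[j] ((π.take (j + 1)).drop i) := by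
    have h := (hπ.take hj).drop (i := i) (by simp; omega)
    rwa [List.getElem_take] at h
  refine le_antisymm (gdist_le_walkLen len hseg) ?_
  have hsplit := walkLen_eq_take_add_drop len π hj
  rw [walkLen_take_eq_add_walkLen_drop_take len π hij hj] at hsplit
  have hA : walkLen len (π.take (i + 1)) ≠ ∞ := by
    refine ne_top_of_le_ne_top hfin ?_; rw [hsplit, add_assoc]; exact le_self_add
  have hD : walkLen len (π.drop j) ≠ ∞ := by
    refine ne_top_of_le_ne_top hfin ?_; rw [hsplit]; exact le_add_self
  have hvia : walkLen len π ≤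
      walkLen len (π.take (i + 1)) + gdist len π[i] π[j] + walkLen len (π.drop j) :=
    calc walkLen len π = gdist len s t := hshort
      _ ≤ gdist len s π[i] + gdist len π[i] π[j] + gdist len π[j] t :=
        (gdist_triangle len s π[j] t).trans
          (add_le_add_left (gdist_triangle len s π[i] π[j]) _)
      _ ≤ _ := by
        gcongr
        · exact gdist_le_walkLen len (hπ.take (by omega))
        · exact gdist_le_walkLen len (hπ.drop hj)
  rw [hsplit] at hvia
  exact (ENNReal.add_le_add_iff_left hA).mp ((ENNReal.add_le_add_iff_right hD).mp hvia)

theorem gdist_add_gdist_of_shortest {len : V → V → ℝ≥0∞} {s t : V} {π : List V}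
    (hπ : IsWalkFromTo s t π) (hshort : walkLen len π = gdist len s t)
    (hfin : walkLen len π ≠ ∞) {i j k : ℕ} (hij : i ≤ j) (hjk : j ≤ k)
    (hk : k < π.length) :
    gdist len π[i] π[j] + gdist len π[j] π[k] = gdist len π[i] π[k] := by
  have hA : walkLen len (π.take (i + 1)) ≠ ∞ := by
    refine ne_top_of_le_ne_top hfin ?_
    rw [walkLen_eq_take_add_drop len π (i := i) (by omega)]; exact le_self_add
  rw [gdist_eq_walkLen_drop_take hπ hshort hfin hij (by omega),
    gdist_eq_walkLen_drop_take hπ hshort hfin hjk hk,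
    gdist_eq_walkLen_drop_take hπ hshort hfin (hij.trans hjk) hk,
    ← ENNReal.add_right_inj hA, ← add_assoc,
    ← walkLen_take_eq_add_walkLen_drop_take len π hij (by omega),
    ← walkLen_take_eq_add_walkLen_drop_take len π hjk hk,
    ← walkLen_take_eq_add_walkLen_drop_take len π (hij.trans hjk) hk]

theorem two_zpow_succ_add_two_zpow_succ (y : ℤ) :
    (2 : ℝ≥0∞) ^ (y + 1) + 2 ^ (y + 1) = 2 ^ y + 2 ^ y + 2 ^ y + 2 ^ y := by
  rw [ENNReal.zpow_add two_ne_zero ENNReal.ofNat_ne_top, zpow_one]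
  ring

/-- in an undirected graph with positive weights, a vertex `w`
cannot be adjacent — with all five edge weights in the same dyadic class
`[2^y, 2^(y+1))` and `len(v_{i_k}, w) ≤ dist(v_{i_k}, v_{i_{k+1}})` for
`k = 1,…,4` — to five distinct vertices of a shortest path: this yields a
contradiction. Hence at most 4 such vertices per dyadic class. -/
theorem stmt_11 (len : V → V → ℝ≥0∞)
    (hsymm : ∀ u v, len u v = len v u)
    (s t : V) (π : List V) (hπ : IsWalkFromTo s t π)
    (hshort : walkLen len π = gdist len s t) (hfin : gdist len s t ≠ ∞)
    (y : ℤ) (w : V) (idx : ℕ → ℕ)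
    (hmono : ∀ k l, k < l → l < 5 → idx k < idx l)
    (hb : ∀ k, k < 5 → idx k < π.length)
    (hclass : ∀ k (hk : k < 5),
      (2:ℝ≥0∞) ^ y ≤ len (π.get ⟨idx k, hb k hk⟩) w ∧
        len (π.get ⟨idx k, hb k hk⟩) w < (2:ℝ≥0∞) ^ (y + 1))
    (hle : ∀ k, (hk : k < 4) →
      len (π.get ⟨idx k, hb k (by omega)⟩) w ≤
        gdist len (π.get ⟨idx k, hb k (by omega)⟩)
          (π.get ⟨idx (k+1), hb (k+1) (by omega)⟩)) :
    False := by
  let x (k : ℕ) (hk : k < 5) : V := π[idx k]'(hb k hk)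
  have hidx : ∀ k l, k ≤ l → l < 5 → idx k ≤ idx l := fun k l hkl hl =>
    hkl.eq_or_lt.elim (fun h => h ▸ le_rfl) fun h => (hmono k l h hl).le
  have hadd := fun k (hk : k < 4) =>
    gdist_add_gdist_of_shortest (len := len) hπ hshort (hshort ▸ hfin)
      (hidx 0 k (by omega) (by omega)) (hidx k (k + 1) (by omega) (by omega))
      (hb (k + 1) (by omega))
  have hsum : gdist len (x 0 (by omega)) (x 1 (by omega)) +
      gdist len (x 1 (by omega)) (x 2 (by omega)) + gdist len (x 2 (by omega)) (x 3 (by omega)) +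
      gdist len (x 3 (by omega)) (x 4 (by omega)) =
        gdist len (x 0 (by omega)) (x 4 (by omega)) := by
    rw [hadd 1 (by norm_num), hadd 2 (by norm_num), hadd 3 (by norm_num)]
  have hstep : ∀ k (hk : k < 4), 2 ^ y ≤ gdist len (x k (by omega)) (x (k + 1) (by omega)) :=
    fun k hk => (hclass k (by omega)).1.trans (hle k hk)
  have hdetour : gdist len (x 0 (by omega)) (x 4 (by omega)) < 2 ^ (y + 1) + 2 ^ (y + 1) := by
    refine (gdist_le_len_add_len len _ w _).trans_lt ?_
    rw [hsymm w]
    exact ENNReal.add_lt_add (hclass 0 (by omega)).2 (hclass 4 (by omega)).2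
  rw [two_zpow_succ_add_two_zpow_succ, ← hsum] at hdetour
  exact hdetour.not_ge (by gcongr <;> apply hstep <;> omega)
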